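/- arXiv:1401.5917 — 4 statements merged into one kernel-verified Lean document; each statement's English description precedes it below -/
import Mathlib

section
/- Let A and B be bounded self-adjoint operators on a complex Hilbert space H such that AB is normal. If σ(A) ∩ σ(−A) ⊆ {0} or σ(B) ∩ σ(−B) ⊆ {0} (where σ denotes the spectrum), then AB is self-adjoint. -/
open NormedSpace

section FP

variable {𝔸 : Type*} [NormedRing 𝔸] [StarRing 𝔸] [CStarRing 𝔸] [NormedAlgebra ℂ 𝔸]
  [CompleteSpace 𝔸] [StarModule ℂ 𝔸]

lemma exp_intertwine (M N X : 𝔸) (h : M * X = X * N) :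
    exp M * X = X * exp N := by
  have hpow : ∀ n : ℕ, M ^ n * X = X * N ^ n := by
    intro n; induction n with
    | zero => simp
    | succ n ih => rw [pow_succ, pow_succ, mul_assoc, h, ← mul_assoc, ih, mul_assoc]
  simp only [exp_eq_tsum ℂ]
  rw [← (expSeries_summable' (𝕂 := ℂ) M).tsum_mul_right X,
      ← (expSeries_summable' (𝕂 := ℂ) N).tsum_mul_left X]
  refine tsum_congr fun n => ?_
  rw [smul_mul_assoc, hpow n, mul_smul_comm]

lemma norm_one_le_of_cstar : True := trivial

end FP

section FP2
set_option linter.unusedSectionVars false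

variable {𝔸 : Type*} [NormedRing 𝔸] [StarRing 𝔸] [CStarRing 𝔸] [NormedAlgebra ℂ 𝔸]
  [CompleteSpace 𝔸] [StarModule ℂ 𝔸] [ContinuousStar 𝔸]

lemma norm_exp_skew (S : 𝔸) (hS : star S = -S) : ‖exp S‖ ≤ 1 := by
  have h1 : star (exp S) * exp S = 1 := by
    letI : NormedAlgebra ℚ 𝔸 := NormedAlgebra.restrictScalars ℚ ℂ 𝔸
    rw [star_exp, hS, ← exp_add_of_commute (Commute.neg_left (Commute.refl S)),
      neg_add_cancel, exp_zero]
  have h2 : ‖star (exp S) * exp S‖ = ‖exp S‖ * ‖exp S‖ :=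
    CStarRing.norm_star_mul_self
  have h3 : ‖(1 : 𝔸)‖ ≤ 1 := by
    have h4 : ‖(1 : 𝔸)‖ * ‖(1 : 𝔸)‖ = ‖(1 : 𝔸)‖ := by
      simpa using (CStarRing.norm_star_mul_self (x := (1 : 𝔸))).symm
    nlinarith [norm_nonneg (1 : 𝔸)]
  rw [h1] at h2
  nlinarith [norm_nonneg (exp S)]

lemma fuglede_putnam (M N X : 𝔸) (hM : star M * M = M * star M)
    (hN : star N * N = N * star N) (h : M * X = X * N) :
    star M * X = X * star N := by
  have key : ∀ z : ℂ, exp (z • M) * X = X * exp (z • N) := fun z =>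
    exp_intertwine _ _ _ (by rw [smul_mul_assoc, h, mul_smul_comm])
  have expinv : ∀ (Y : 𝔸) (z : ℂ), exp (z • Y) * exp ((-z) • Y) = 1 := by
    intro Y z
    letI : NormedAlgebra ℚ 𝔸 := NormedAlgebra.restrictScalars ℚ ℂ 𝔸
    rw [← exp_add_of_commute (((Commute.refl Y).smul_left z).smul_right (-z)),
      ← add_smul, add_neg_cancel, zero_smul, exp_zero]
  have expinv' : ∀ (Y : 𝔸) (z : ℂ), exp ((-z) • Y) * exp (z • Y) = 1 := by
    intro Y z; simpa using expinv Y (-z)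
  set f : ℂ → 𝔸 := fun z => exp (z • star M) * X * exp ((-z) • star N) with hf
  have hdiff : Differentiable ℂ f := by
    have d1 : Differentiable ℂ (fun z : ℂ => exp (z • star M)) := fun z =>
      (hasDerivAt_exp_smul_const (𝕂 := ℂ) (star M) z).differentiableAt
    have d1' : Differentiable ℂ (fun z : ℂ => exp (z • star N)) := fun z =>
      (hasDerivAt_exp_smul_const (𝕂 := ℂ) (star N) z).differentiableAt
    have d2 : Differentiable ℂ (fun z : ℂ => exp ((-z) • star N)) :=
      d1'.comp differentiable_neg
    exact (d1.mul (differentiable_const X)).mul d2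
  have hXeq : ∀ w : ℂ, exp (w • M) * X * exp ((-w) • N) = X := by
    intro w
    rw [key w, mul_assoc, expinv, mul_one]
  have hXeq' : ∀ w : ℂ, exp ((-w) • M) * X * exp (w • N) = X := by
    intro w; simpa using hXeq (-w)
  have hbound : ∀ z : ℂ, ‖f z‖ ≤ ‖X‖ := by
    intro z
    have hMc : Commute (star M) M := hM
    have hNc : Commute (star N) N := hN
    have hc1 : Commute (z • star M) ((-(starRingEnd ℂ z)) • M) :=
      ((hMc.smul_left z).smul_right (-(starRingEnd ℂ z)))
    have hc2 : Commute ((starRingEnd ℂ z) • N) ((-z) • star N) :=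
      ((hNc.symm.smul_left (starRingEnd ℂ z)).smul_right (-z))
    have hfz : f z = exp (z • star M + (-(starRingEnd ℂ z)) • M) * X *
        exp ((starRingEnd ℂ z) • N + (-z) • star N) := by
      letI : NormedAlgebra ℚ 𝔸 := NormedAlgebra.restrictScalars ℚ ℂ 𝔸
      rw [exp_add_of_commute hc1, exp_add_of_commute hc2]
      calc f z = exp (z • star M) *
            (exp ((-(starRingEnd ℂ z)) • M) * X * exp ((starRingEnd ℂ z) • N)) *
            exp ((-z) • star N) := by rw [hXeq']
        _ = _ := by noncomm_ring
    have hs1 : star (z • star M + (-(starRingEnd ℂ z)) • M) =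
        -(z • star M + (-(starRingEnd ℂ z)) • M) := by
      simp only [star_add, star_smul, star_star, star_neg, RCLike.star_def,
        Complex.conj_conj]
      module
    have hs2 : star ((starRingEnd ℂ z) • N + (-z) • star N) =
        -((starRingEnd ℂ z) • N + (-z) • star N) := by
      simp only [star_add, star_smul, star_star, star_neg, RCLike.star_def,
        Complex.conj_conj]
      module
    rw [hfz]
    calc ‖exp (z • star M + (-(starRingEnd ℂ z)) • M) * X *
          exp ((starRingEnd ℂ z) • N + (-z) • star N)‖
        ≤ ‖exp (z • star M + (-(starRingEnd ℂ z)) • M) * X‖ *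
          ‖exp ((starRingEnd ℂ z) • N + (-z) • star N)‖ := norm_mul_le _ _
      _ ≤ ‖exp (z • star M + (-(starRingEnd ℂ z)) • M)‖ * ‖X‖ *
          ‖exp ((starRingEnd ℂ z) • N + (-z) • star N)‖ :=
          mul_le_mul_of_nonneg_right (norm_mul_le _ _) (norm_nonneg _)
      _ ≤ 1 * ‖X‖ * 1 := by
          have b1 := norm_exp_skew _ hs1
          have b2 := norm_exp_skew _ hs2
          exact mul_le_mul (mul_le_mul_of_nonneg_right b1 (norm_nonneg X)) b2
            (norm_nonneg _) (by positivity)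
      _ = ‖X‖ := by ring
  have hbdd : Bornology.IsBounded (Set.range f) := by
    rw [isBounded_iff_forall_norm_le]
    exact ⟨‖X‖, by rintro y ⟨z, rfl⟩; exact hbound z⟩
  have hfX : ∀ z : ℂ, exp (z • star M) * X * exp ((-z) • star N) = X := by
    intro z
    have h0 : f 0 = X := by simp [hf]
    have := hdiff.apply_eq_apply_of_bounded hbdd z 0
    rw [h0] at this
    exact this
  have hsemi : ∀ z : ℂ, exp (z • star M) * X = X * exp (z • star N) := by
    intro z
    have h1 := congrArg (· * exp (z • star N)) (hfX z)
    rwa [mul_assoc (exp (z • star M) * X), expinv' , mul_one] at h1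
  have hd1 : HasDerivAt (fun z : ℂ => exp (z • star M) * X) (star M * X) 0 := by
    simpa using ((hasDerivAt_exp_smul_const' (𝕂 := ℂ) (star M) 0).mul_const X)
  have hd2 : HasDerivAt (fun z : ℂ => X * exp (z • star N)) (X * star N) 0 := by
    simpa using ((hasDerivAt_exp_smul_const' (𝕂 := ℂ) (star N) 0).const_mul X)
  have heqfun : (fun z : ℂ => exp (z • star M) * X) =
      fun z : ℂ => X * exp (z • star N) := funext hsemi
  exact hd1.unique (heqfun ▸ hd2)
end FP2

section CFC
set_option linter.unusedSectionVars false

variable {𝔸 : Type*} [CStarAlgebra 𝔸]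

lemma commute_aeval (a X : 𝔸) (hX : Commute X a) (p : Polynomial ℝ) :
    Commute X (Polynomial.aeval a p) := by
  induction p using Polynomial.induction_on' with
  | add p q hp hq => rw [map_add]; exact hp.add_right hq
  | monomial n c =>
    rw [Polynomial.aeval_monomial]
    exact (Algebra.commute_algebraMap_right c X).mul_right (hX.pow_right n)

lemma commute_cfc (a X : 𝔸) (ha : IsSelfAdjoint a) (hX : Commute X a)
    (g : ℝ → ℝ) (hg : Continuous g) : Commute X (cfc g a) := by
  have hg' : ContinuousOn g (spectrum ℝ a) := hg.continuousOn
  rw [cfc_apply g a ha hg']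
  set φ : C(spectrum ℝ a, ℝ) →⋆ₐ[ℝ] 𝔸 := cfcHom (R := ℝ) ha with hφ
  suffices hsuff : ∀ f : C(spectrum ℝ a, ℝ), Commute X (φ f) from hsuff _
  intro f
  have hclosed : IsClosed {f : C(spectrum ℝ a, ℝ) | Commute X (φ f)} :=
    isClosed_eq (continuous_const.mul (cfcHom_continuous ha))
      ((cfcHom_continuous ha).mul continuous_const)
  have hpoly : (polynomialFunctions (spectrum ℝ a) : Set C(spectrum ℝ a, ℝ)) ⊆
      {f : C(spectrum ℝ a, ℝ) | Commute X (φ f)} := by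
    intro f hf
    rw [SetLike.mem_coe] at hf
    rw [polynomialFunctions, Subalgebra.mem_map] at hf
    obtain ⟨p, -, rfl⟩ := hf
    have key : φ (Polynomial.toContinuousMapOnAlgHom (spectrum ℝ a) p) =
        Polynomial.aeval a p := by
      have h1 : cfc (fun x : ℝ => p.eval x) a = Polynomial.aeval a p := cfc_polynomial p a ha
      rw [cfc_apply (fun x : ℝ => p.eval x) a ha p.continuous.continuousOn] at h1
      rw [← h1, hφ]
      exact congrArg _ (ContinuousMap.ext fun x => rfl)
    rw [Set.mem_setOf_eq, key]
    exact commute_aeval a X hX p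
  have htop := polynomialFunctions.topologicalClosure (spectrum ℝ a)
  have hmem : f ∈ closure (polynomialFunctions (spectrum ℝ a) : Set C(spectrum ℝ a, ℝ)) := by
    rw [← Subalgebra.topologicalClosure_coe, htop]
    exact Algebra.mem_top
  exact hclosed.closure_subset_iff.mpr hpoly hmem

end CFC

section SQ
set_option linter.unusedSectionVars false

variable {𝔸 : Type*} [CStarAlgebra 𝔸]

lemma eq_cfc_sq (a : 𝔸) (ha : IsSelfAdjoint a)
    (hs : spectrum ℝ a ∩ (-(spectrum ℝ a)) ⊆ {0}) :
    ∃ g : ℝ → ℝ, Continuous g ∧ cfc g (a ^ 2) = a := by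
  set S : Set ℝ := spectrum ℝ a with hS
  have hScpt : IsCompact S := isCompact_iff_compactSpace.mpr inferInstance
  set K : Set ℝ := (fun t : ℝ => t ^ 2) '' S with hK
  have hKcpt : IsCompact K := hScpt.image (continuous_pow 2)
  have hinj : ∀ s ∈ S, ∀ u ∈ S, s ^ 2 = u ^ 2 → s = u := by
    intro s hsS u huS hsu
    rcases sq_eq_sq_iff_eq_or_eq_neg.mp hsu with h | h
    · exact h
    · have h0 : s ∈ S ∩ (-S) := ⟨hsS, by rw [Set.mem_neg, h, neg_neg]; exact huS⟩
      have h1 : s = 0 := hs h0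
      have h2 : u = 0 := by
        have := h ▸ h1; linarith [neg_eq_zero.mp (by linarith [this] : -u = (0:ℝ))]
      rw [h1, h2]
  let e : S → K := fun t => ⟨(t : ℝ) ^ 2, ⟨(t : ℝ), t.2, rfl⟩⟩
  have he : Continuous e :=
    Continuous.subtype_mk ((continuous_pow 2).comp continuous_subtype_val) _
  have hbij : Function.Bijective e := by
    constructor
    · rintro ⟨s, hs'⟩ ⟨u, hu'⟩ h
      exact Subtype.ext (hinj s hs' u hu' (congrArg Subtype.val h))
    · rintro ⟨x, t, ht, rfl⟩
      exact ⟨⟨t, ht⟩, rfl⟩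
  haveI : CompactSpace S := isCompact_iff_compactSpace.mp hScpt
  let E : S ≃ₜ K := (Continuous.homeoOfEquivCompactToT2 (f := Equiv.ofBijective e hbij) he)
  let f0 : C(K, ℝ) := ⟨fun k => ((E.symm k : S) : ℝ), by
    exact continuous_subtype_val.comp E.symm.continuous⟩
  obtain ⟨g, hg⟩ := f0.exists_restrict_eq hKcpt.isClosed
  refine ⟨g, g.continuous, ?_⟩
  have hgs : ∀ t ∈ S, g (t ^ 2) = t := by
    intro t ht
    have hmem : t ^ 2 ∈ K := ⟨t, ht, rfl⟩
    have h1 : g (t ^ 2) = f0 ⟨t ^ 2, hmem⟩ := by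
      have := congrFun (congrArg DFunLike.coe hg) ⟨t ^ 2, hmem⟩
      simpa using this
    have h2 : E ⟨t, ht⟩ = ⟨t ^ 2, hmem⟩ := rfl
    rw [h1]
    show ((E.symm ⟨t ^ 2, hmem⟩ : S) : ℝ) = t
    rw [← h2, Homeomorph.symm_apply_apply]
  have hsq : a ^ 2 = cfc (fun t : ℝ => t ^ 2) a := (cfc_pow_id (R := ℝ) a 2 ha).symm
  rw [hsq, ← cfc_comp' (⇑g) (fun t : ℝ => t ^ 2) a (g.continuous.continuousOn) ((continuous_pow 2).continuousOn) ha]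
  calc cfc (fun t : ℝ => g (t ^ 2)) a = cfc (id : ℝ → ℝ) a :=
        cfc_congr fun t ht => hgs t ht
    _ = a := cfc_id ℝ a ha

end SQ

section Main
set_option linter.unusedSectionVars false

variable {𝔸 : Type*} [CStarAlgebra 𝔸]

lemma spec_real (a : 𝔸) (h : spectrum ℂ a ∩ spectrum ℂ (-a) ⊆ {0}) :
    spectrum ℝ a ∩ (-(spectrum ℝ a)) ⊆ {0} := by
  rintro t ⟨ht1, ht2⟩
  have h1 : (algebraMap ℝ ℂ t : ℂ) ∈ spectrum ℂ a := spectrum.algebraMap_mem ℂ ht1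
  have ht2' : -t ∈ spectrum ℝ a := Set.mem_neg.mp ht2
  have h2 : (algebraMap ℝ ℂ (-t) : ℂ) ∈ spectrum ℂ a := spectrum.algebraMap_mem ℂ ht2'
  have h3 : (algebraMap ℝ ℂ t : ℂ) ∈ spectrum ℂ (-a) := by
    rw [← spectrum.neg_eq]
    rw [Set.mem_neg]
    simpa using h2
  have h4 := h ⟨h1, h3⟩
  simp only [Set.mem_singleton_iff, map_eq_zero] at h4
  simpa using h4

end Main

theorem stmt_16 {H : Type*} [NormedAddCommGroup H] [InnerProductSpace ℂ H] [CompleteSpace H]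
    (A B : H →L[ℂ] H)
    (hA : IsSelfAdjoint A) (hB : IsSelfAdjoint B)
    (hn : ContinuousLinearMap.adjoint (A * B) * (A * B) = (A * B) * ContinuousLinearMap.adjoint (A * B))
    (hspec : spectrum ℂ A ∩ spectrum ℂ (-A) ⊆ {0} ∨
      spectrum ℂ B ∩ spectrum ℂ (-B) ⊆ {0}) :
    IsSelfAdjoint (A * B) := by
  have hn' : star (A * B) * (A * B) = (A * B) * star (A * B) := by
    rw [ContinuousLinearMap.star_eq_adjoint]; exact hn
  have hsT : star (A * B) = B * A := by rw [star_mul, hA.star_eq, hB.star_eq]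
  have hN : star (star (A * B)) * star (A * B) = star (A * B) * star (star (A * B)) := by
    rw [star_star]; exact hn'.symm
  suffices hAB : Commute A B by
    rw [IsSelfAdjoint, star_mul, hA.star_eq, hB.star_eq]
    exact hAB.symm.eq
  rcases hspec with hsA | hsB
  · have h1 : (A * B) * A = A * star (A * B) := by rw [hsT, mul_assoc]
    have hFP := fuglede_putnam (A * B) (star (A * B)) A hn' hN h1
    rw [star_star, hsT] at hFP
    have hc2 : Commute B (A ^ 2) := by
      rw [Commute, SemiconjBy, pow_two, ← mul_assoc, hFP, ← mul_assoc]
    obtain ⟨g, hgc, hga⟩ := eq_cfc_sq A hA (spec_real A hsA)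
    have hkey := commute_cfc (A ^ 2) B (hA.pow 2) hc2 g hgc
    rw [hga] at hkey
    exact hkey.symm
  · have h1 : star (A * B) * B = B * (A * B) := by rw [hsT, mul_assoc]
    have hFP := fuglede_putnam (star (A * B)) (A * B) B hN hn' h1
    rw [star_star, hsT] at hFP
    have hc2 : Commute A (B ^ 2) := by
      rw [Commute, SemiconjBy, pow_two, ← mul_assoc, hFP, ← mul_assoc]
    obtain ⟨g, hgc, hga⟩ := eq_cfc_sq B hB (spec_real B hsB)
    have hkey := commute_cfc (B ^ 2) A (hB.pow 2) hc2 g hgc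
    rw [hga] at hkey
    exact hkey
end

section
/- Let A and B be bounded operators on a complex Hilbert space H and let λ be a nonzero complex number such that AB = λBA and AB ≠ 0. If A is self-adjoint or B is self-adjoint, then λ is real; if one of A, B is self-adjoint and the other is normal, then λ = 1 or λ = −1; and if both A and B are normal, then |λ| = 1. -/
open NormedSpace
open scoped Nat

namespace Stmt17Aux

variable {H : Type*} [NormedAddCommGroup H] [InnerProductSpace ℂ H] [CompleteSpace H]

noncomputable instance instNormedAlgebraRatCLM : NormedAlgebra ℚ (H →L[ℂ] H) :=
  NormedAlgebra.restrictScalars ℚ ℂ (H →L[ℂ] H)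

lemma smul_cancel {X : H →L[ℂ] H} {a b : ℂ} (h : a • X = b • X) (hX : X ≠ 0) : a = b := by
  by_contra hab
  apply hX
  have h2 : (a - b) • X = 0 := by rw [sub_smul, h, sub_self]
  have h3 := congrArg (fun Y : H →L[ℂ] H => (a - b)⁻¹ • Y) h2
  simpa [smul_smul, inv_mul_cancel₀ (sub_ne_zero.mpr hab)] using h3

lemma exp_intertwine {M N T : H →L[ℂ] H} (h : M * T = T * N) :
    exp M * T = T * exp N := by
  have hn : ∀ n : ℕ, M ^ n * T = T * N ^ n := by
    intro n
    induction n with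
    | zero => simp
    | succ k ih => rw [pow_succ, pow_succ, mul_assoc, h, ← mul_assoc, ih, mul_assoc]
  calc exp M * T = ∑' n : ℕ, ((n !⁻¹ : ℂ) • M ^ n) * T := by
        rw [exp_eq_tsum ℂ, ← Summable.tsum_mul_right T (expSeries_summable' (𝕂 := ℂ) M)]
    _ = ∑' n : ℕ, T * ((n !⁻¹ : ℂ) • N ^ n) := by
        congr 1; funext n; rw [smul_mul_assoc, mul_smul_comm, hn]
    _ = T * exp N := by
        rw [exp_eq_tsum ℂ, ← Summable.tsum_mul_left T (expSeries_summable' (𝕂 := ℂ) N)]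

lemma norm_exp_le_one {S : H →L[ℂ] H} (hS : star S = -S) : ‖exp S‖ ≤ 1 := by
  have h1 : star (exp S) * exp S = 1 := by
    rw [star_exp, hS, ← exp_add_of_commute ((Commute.refl S).neg_left)]
    rw [neg_add_cancel, exp_zero]
  have h2 : ‖exp S‖ * ‖exp S‖ ≤ 1 := by
    rw [← CStarRing.norm_star_mul_self, h1, ContinuousLinearMap.one_def]
    exact ContinuousLinearMap.norm_id_le
  nlinarith [norm_nonneg (exp S)]

theorem fuglede_putnam {M N T : H →L[ℂ] H} (hM : Commute (star M) M)
    (hN : Commute (star N) N) (h : M * T = T * N) :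
    star M * T = T * star N := by
  have key : ∀ z : ℂ, exp (z • star M) * T * exp (z • (-star N)) = T := by
    have dM : Differentiable ℂ fun z : ℂ => exp (z • star M) :=
      fun t => (hasDerivAt_exp_smul_const (star M) t).differentiableAt
    have dN : Differentiable ℂ fun z : ℂ => exp (z • (-star N)) :=
      fun t => (hasDerivAt_exp_smul_const (-star N) t).differentiableAt
    have hdiff : Differentiable ℂ fun z : ℂ =>
        exp (z • star M) * T * exp (z • (-star N)) :=
      (dM.mul (differentiable_const T)).mul dN
    have hbound : ∀ z : ℂ, ‖exp (z • star M) * T * exp (z • (-star N))‖ ≤ ‖T‖ := by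
      intro z
      set c : ℂ := star z with hc
      have hcomm1 : Commute (z • star M - c • M) (c • M) :=
        Commute.sub_left ((hM.smul_right c).smul_left z) (Commute.refl (c • M))
      have e1 : exp (z • star M) = exp (z • star M - c • M) * exp (c • M) := by
        rw [← exp_add_of_commute hcomm1, sub_add_cancel]
      have hcomm2 : Commute (-(c • N)) (c • N - z • star N) :=
        (Commute.sub_right (Commute.refl (c • N))
          ((hN.symm.smul_left c).smul_right z)).neg_left
      have e2 : exp (z • (-star N)) = exp (-(c • N)) * exp (c • N - z • star N) := by
        have : z • (-star N) = -(c • N) + (c • N - z • star N) := by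
          rw [smul_neg]; abel
        rw [this, exp_add_of_commute hcomm2]
      have e3 : exp (c • M) * T = T * exp (c • N) :=
        exp_intertwine (by rw [smul_mul_assoc, mul_smul_comm, h])
      have e4 : exp (c • N) * exp (-(c • N)) = 1 := by
        rw [← exp_add_of_commute (Commute.refl (c • N)).neg_right, add_neg_cancel, exp_zero]
      have emid : exp (c • M) * T * exp (-(c • N)) = T := by
        rw [e3, mul_assoc, e4, mul_one]
      have skew1 : star (z • star M - c • M) = -(z • star M - c • M) := by
        simp only [hc, star_sub, star_smul, star_star, neg_sub]
      have skew2 : star (c • N - z • star N) = -(c • N - z • star N) := by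
        simp only [hc, star_sub, star_smul, star_star, neg_sub]
      have b1 : ‖exp (z • star M - c • M)‖ ≤ 1 := norm_exp_le_one skew1
      have b2 : ‖exp (c • N - z • star N)‖ ≤ 1 := norm_exp_le_one skew2
      set E1 := exp (z • star M - c • M) with hE1
      set E2 := exp (c • N - z • star N) with hE2
      have expand : exp (z • star M) * T * exp (z • (-star N)) = E1 * T * E2 := by
        rw [e1, e2]
        calc E1 * exp (c • M) * T * (exp (-(c • N)) * E2)
            = E1 * (exp (c • M) * T * exp (-(c • N))) * E2 := by
              simp only [mul_assoc]
          _ = E1 * T * E2 := by rw [emid]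
      rw [expand]
      calc ‖E1 * T * E2‖ ≤ ‖E1 * T‖ * ‖E2‖ := norm_mul_le _ _
        _ ≤ ‖E1‖ * ‖T‖ * ‖E2‖ :=
            mul_le_mul_of_nonneg_right (norm_mul_le _ _) (norm_nonneg _)
        _ ≤ ‖T‖ := by
            nlinarith [mul_nonneg (sub_nonneg.2 b1) (norm_nonneg T),
              mul_nonneg (mul_nonneg (norm_nonneg E1) (norm_nonneg T)) (sub_nonneg.2 b2)]
    have hbdd : Bornology.IsBounded
        (Set.range fun z : ℂ => exp (z • star M) * T * exp (z • (-star N))) := by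
      rw [Metric.isBounded_iff_subset_closedBall 0]
      exact ⟨‖T‖, by rintro x ⟨z, rfl⟩; simpa [Metric.mem_closedBall] using hbound z⟩
    intro z
    have := hdiff.apply_eq_apply_of_bounded hbdd z 0
    simpa using this
  have key2 : ∀ z : ℂ, exp (z • star M) * T = T * exp (z • star N) := by
    intro z
    have h4 : exp (z • (-star N)) * exp (z • star N) = 1 := by
      have hz : z • (-star N) = -(z • star N) := smul_neg _ _
      rw [hz, ← exp_add_of_commute (Commute.refl (z • star N)).neg_left,
        neg_add_cancel, exp_zero]
    calc exp (z • star M) * T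
        = exp (z • star M) * T * (exp (z • (-star N)) * exp (z • star N)) := by
          rw [h4, mul_one]
      _ = (exp (z • star M) * T * exp (z • (-star N))) * exp (z • star N) := by
          simp only [mul_assoc]
      _ = T * exp (z • star N) := by rw [key z]
  have d1 : HasDerivAt (fun z : ℂ => exp (z • star M) * T) (star M * T) 0 := by
    have := (hasDerivAt_exp_smul_const (star M) (0 : ℂ)).mul_const T
    simpa using this
  have d2 : HasDerivAt (fun z : ℂ => T * exp (z • star N)) (T * star N) 0 := by
    have := (hasDerivAt_exp_smul_const (star N) (0 : ℂ)).const_mul T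
    simpa [mul_assoc] using this
  have feq : (fun z : ℂ => exp (z • star M) * T) =
      fun z : ℂ => T * exp (z • star N) := funext key2
  rw [feq] at d1
  exact d1.unique d2

lemma conj_eq_of_selfAdjoint {A B : H →L[ℂ] H} {l : ℂ} (hA : IsSelfAdjoint A)
    (hcomm : A * B = l • (B * A)) (hBA : B * A ≠ 0) : l = star l := by
  have hM : Commute (star A) A := by rw [hA.star_eq]
  have hN : Commute (star (l • A)) (l • A) := by
    rw [star_smul, hA.star_eq]
    exact ((Commute.refl A).smul_left _).smul_right _
  have h := fuglede_putnam hM hN (show A * B = B * (l • A) by rw [hcomm, mul_smul_comm])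
  rw [hA.star_eq, star_smul, hA.star_eq, mul_smul_comm, hcomm] at h
  exact smul_cancel h hBA

lemma mul_star_eq_one {A B : H →L[ℂ] H} {l : ℂ} (hl : l ≠ 0)
    (hA : Commute (star A) A) (hB : Commute (star B) B)
    (hcomm : A * B = l • (B * A)) (hne : A * B ≠ 0) : l * star l = 1 := by
  have hNA : Commute (star (l • A)) (l • A) := by
    rw [star_smul]; exact (hA.smul_left _).smul_right _
  have s1 := fuglede_putnam hA hNA (show A * B = B * (l • A) by rw [hcomm, mul_smul_comm])
  rw [star_smul, mul_smul_comm] at s1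
  -- s1 : star A * B = star l • (B * star A)
  have s2 : star B * A = l • (A * star B) := by
    have h' := congrArg star s1
    rw [star_mul, star_star, star_smul, star_mul, star_star, star_star] at h'
    exact h'
  have hcomm' : B * A = l⁻¹ • (A * B) := by
    rw [hcomm, smul_smul, inv_mul_cancel₀ hl, one_smul]
  have hNB : Commute (star (l⁻¹ • B)) (l⁻¹ • B) := by
    rw [star_smul]; exact (hB.smul_left _).smul_right _
  have s3 := fuglede_putnam hB hNB (show B * A = A * (l⁻¹ • B) by rw [hcomm', mul_smul_comm])
  rw [star_smul, mul_smul_comm] at s3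
  -- s3 : star B * A = star l⁻¹ • (A * star B)
  have hAsB : A * star B ≠ 0 := by
    intro h0
    apply hne
    have h1 : (A * B) * star (A * B) = 0 := by
      have hx : (A * B) * star (A * B) = (A * star B) * (B * star A) := by
        rw [star_mul]
        calc A * B * (star B * star A) = A * (B * star B) * star A := by noncomm_ring
          _ = A * (star B * B) * star A := by rw [← hB.eq]
          _ = (A * star B) * (B * star A) := by noncomm_ring
      rw [hx, h0, zero_mul]
    exact (CStarRing.mul_star_self_eq_zero_iff _).mp h1
  have hls : l = star l⁻¹ := smul_cancel (s2.symm.trans s3) hAsB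
  have hsl : star l ≠ 0 := fun h0 => hl (by simpa using congrArg star h0)
  calc l * star l = star l⁻¹ * star l := by rw [← hls]
    _ = (star l)⁻¹ * star l := by rw [star_inv₀]
    _ = 1 := inv_mul_cancel₀ hsl

end Stmt17Aux

theorem stmt_17 {H : Type*} [NormedAddCommGroup H] [InnerProductSpace ℂ H] [CompleteSpace H]
    (A B : H →L[ℂ] H) (l : ℂ) (hl : l ≠ 0)
    (hcomm : A * B = l • (B * A)) (hne : A * B ≠ 0) :
    ((IsSelfAdjoint A ∨ IsSelfAdjoint B) → l.im = 0) ∧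
    (((IsSelfAdjoint A ∧ (ContinuousLinearMap.adjoint B * B = B * ContinuousLinearMap.adjoint B)) ∨
      (IsSelfAdjoint B ∧ (ContinuousLinearMap.adjoint A * A = A * ContinuousLinearMap.adjoint A))) → (l = 1 ∨ l = -1)) ∧
    (((ContinuousLinearMap.adjoint A * A = A * ContinuousLinearMap.adjoint A) ∧ (ContinuousLinearMap.adjoint B * B = B * ContinuousLinearMap.adjoint B)) →
      ‖l‖ = 1) := by
  have hBA : B * A ≠ 0 := fun h0 => hne (by rw [hcomm, h0, smul_zero])
  -- conversions between adjoint-normality and star-commutation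
  have normal_of : ∀ X : H →L[ℂ] H,
      (ContinuousLinearMap.adjoint X * X = X * ContinuousLinearMap.adjoint X) →
      Commute (star X) X := by
    intro X hX
    show star X * X = X * star X
    rw [ContinuousLinearMap.star_eq_adjoint]
    exact hX
  have part1 : (IsSelfAdjoint A ∨ IsSelfAdjoint B) → l = star l := by
    rintro (hA | hB)
    · exact Stmt17Aux.conj_eq_of_selfAdjoint hA hcomm hBA
    · have hcomm' : B * A = l⁻¹ • (A * B) := by
        rw [hcomm, smul_smul, inv_mul_cancel₀ hl, one_smul]
      have h := Stmt17Aux.conj_eq_of_selfAdjoint hB hcomm' hne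
      have : l⁻¹ = (star l)⁻¹ := by rw [h, star_inv₀]
      exact inv_injective this
  have part3 : Commute (star A) A → Commute (star B) B → l * star l = 1 :=
    fun hA hB => Stmt17Aux.mul_star_eq_one hl hA hB hcomm hne
  refine ⟨?_, ?_, ?_⟩
  · intro h
    have := part1 h
    exact Complex.conj_eq_iff_im.mp this.symm
  · rintro (⟨hA, hBn⟩ | ⟨hB, hAn⟩)
    · have h1 : l = star l := part1 (Or.inl hA)
      have h2 : l * star l = 1 := part3 (by rw [hA.star_eq]) (normal_of B hBn)
      rw [← h1] at h2
      exact mul_self_eq_one_iff.mp h2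
    · have h1 : l = star l := part1 (Or.inr hB)
      have h2 : l * star l = 1 := part3 (normal_of A hAn) (by rw [hB.star_eq])
      rw [← h1] at h2
      exact mul_self_eq_one_iff.mp h2
  · rintro ⟨hAn, hBn⟩
    have h2 : l * star l = 1 := part3 (normal_of A hAn) (normal_of B hBn)
    have h3 : (Complex.normSq l : ℂ) = 1 := by
      rw [← Complex.mul_conj l]; exact h2
    have h4 : ‖l‖ ^ 2 = 1 := by
      rw [Complex.sq_norm]
      exact_mod_cast h3
    have h5 : (‖l‖ - 1) * (‖l‖ + 1) = 0 := by ring_nf; linear_combination h4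
    rcases mul_eq_zero.mp h5 with h6 | h6
    · linarith [sub_eq_zero.mp h6]
    · have := norm_nonneg l
      linarith
end

section
/- Let A and B be bounded self-adjoint operators on a complex Hilbert space H and let λ be a nonzero complex number such that AB = λBA and AB ≠ 0. If A is positive or B is positive, then λ = 1. -/
open Complex Pointwise in
lemma aux_stmt_18 {H : Type*} [NormedAddCommGroup H] [InnerProductSpace ℂ H] [CompleteSpace H]
    (A B : H →L[ℂ] H) (l : ℂ) (hl : l ≠ 0)
    (hA : IsSelfAdjoint A) (hB : IsSelfAdjoint B)
    (hcomm : A * B = l • (B * A)) (hne : A * B ≠ 0)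
    (hApos : A.IsPositive) : l = 1 := by
  have hnt : Nontrivial (H →L[ℂ] H) := nontrivial_of_ne _ _ hne
  have haA : (0 : H →L[ℂ] H) ≤ A := (A.nonneg_iff_isPositive).mpr hApos
  set C : H →L[ℂ] H := CFC.sqrt A with hCdef
  have hC0 : (0 : H →L[ℂ] H) ≤ C := CFC.sqrt_nonneg A
  have hCsa : IsSelfAdjoint C := IsSelfAdjoint.of_nonneg hC0
  have hCC : C * C = A := CFC.sqrt_mul_sqrt_self A haA
  -- C*B*C ≠ 0
  have hABA : A * B * A ≠ 0 := by
    intro h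
    have h1 : l • (B * (A * A)) = 0 := by
      rw [← h, hcomm]; simp [smul_mul_assoc, mul_assoc]
    have h2 : B * (A * A) = 0 := by
      rcases smul_eq_zero.mp h1 with h' | h'
      · exact absurd h' hl
      · exact h'
    have h3 : A * A * B = 0 := by
      have := congrArg star h2
      simpa [star_mul, hA.star_eq, hB.star_eq, mul_assoc] using this
    have h4 : star (A * B) * (A * B) = 0 := by
      rw [star_mul, hA.star_eq, hB.star_eq]
      calc B * A * (A * B) = B * (A * A * B) := by simp [mul_assoc]
        _ = 0 := by rw [h3, mul_zero]
    exact hne (by simpa using (CStarRing.star_mul_self_eq_zero_iff (A * B)).mp h4)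
  have hT : C * B * C ≠ 0 := by
    intro h
    apply hABA
    calc A * B * A = C * (C * B * C) * C := by rw [← hCC]; simp [mul_assoc]
      _ = 0 := by rw [h]; simp
  have hTsa : IsSelfAdjoint (C * B * C) := by
    rw [IsSelfAdjoint, star_mul, star_mul, hCsa.star_eq, hB.star_eq]
    simp [mul_assoc]
  -- spectra swap
  have hswap : spectrum ℂ (A * B) \ {0} = spectrum ℂ (C * B * C) \ {0} := by
    have h5 := spectrum.nonzero_mul_comm (𝕜 := ℂ) C (C * B)
    calc spectrum ℂ (A * B) \ {0} = spectrum ℂ (C * (C * B)) \ {0} := by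
          rw [← hCC, mul_assoc]
      _ = spectrum ℂ ((C * B) * C) \ {0} := h5
      _ = spectrum ℂ (C * B * C) \ {0} := rfl
  -- nonzero elements of σ(AB) are real
  have hreal : ∀ s ∈ spectrum ℂ (A * B), s ≠ 0 → s.im = 0 := by
    intro s hs hs0
    have : s ∈ spectrum ℂ (C * B * C) \ {0} := by
      rw [← hswap]; exact ⟨hs, hs0⟩
    exact hTsa.im_eq_zero_of_mem_spectrum this.1
  -- pick nonzero real r ∈ σ(AB)
  obtain ⟨r, hrT, hrnorm⟩ :=
    spectrum.exists_nnnorm_eq_spectralRadius_of_nonempty (spectrum.nonempty (C * B * C))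
  have hr0 : r ≠ 0 := by
    intro h0
    apply hT
    rw [h0, hTsa.spectralRadius_eq_nnnorm] at hrnorm
    have : ‖C * B * C‖₊ = 0 := by exact_mod_cast hrnorm.symm
    simpa using this
  have hrAB : r ∈ spectrum ℂ (A * B) := by
    have : r ∈ spectrum ℂ (C * B * C) \ {0} := ⟨hrT, hr0⟩
    rw [← hswap] at this; exact this.1
  have hrim : r.im = 0 := hreal r hrAB hr0
  -- σ(AB) = l • σ(BA)
  have hBAne : (spectrum ℂ (B * A)).Nonempty := by
    refine ⟨r, ?_⟩
    have := spectrum.nonzero_mul_comm (𝕜 := ℂ) A B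
    have h6 : r ∈ spectrum ℂ (B * A) \ {0} := by rw [← this]; exact ⟨hrAB, hr0⟩
    exact h6.1
  have hsmul : spectrum ℂ (A * B) = l • spectrum ℂ (B * A) := by
    rw [hcomm, spectrum.smul_eq_smul l (B * A) hBAne]
  have hrBA : r ∈ spectrum ℂ (B * A) := by
    have h7 : star r ∈ spectrum ℂ (star (A * B)) := by
      rw [spectrum.map_star, Set.mem_star]
      simpa using hrAB
    have h8 : star r = r := by
      rw [Complex.star_def]; exact Complex.conj_eq_iff_im.mpr hrim
    rwa [h8, star_mul, hA.star_eq, hB.star_eq] at h7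
  have hlr : l * r ∈ spectrum ℂ (A * B) := by
    rw [hsmul]
    exact ⟨r, hrBA, rfl⟩
  have hlrim : (l * r).im = 0 :=
    hreal _ hlr (mul_ne_zero hl hr0)
  have hlim : l.im = 0 := by
    have hre : r.re ≠ 0 := by
      intro h; exact hr0 (Complex.ext h hrim)
    have : l.re * r.im + l.im * r.re = 0 := by
      simpa [Complex.mul_im] using hlrim
    rw [hrim] at this
    simp only [mul_zero, zero_add] at this
    exact (mul_eq_zero.mp this).resolve_right hre
  -- conj l = l, so BA = l • AB, hence l² = 1
  have hconj : star l = l := by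
    rw [Complex.star_def]; exact Complex.conj_eq_iff_im.mpr hlim
  have hBAeq : B * A = l • (A * B) := by
    have := congrArg star hcomm
    rwa [star_mul, star_smul, star_mul, hA.star_eq, hB.star_eq, hconj] at this
  have hsq : l * l = 1 := by
    have h9 : A * B = (l * l) • (A * B) := by
      conv_lhs => rw [hcomm, hBAeq, smul_smul]
    by_contra hne1
    have : (1 - l * l) • (A * B) = 0 := by
      rw [sub_smul, one_smul, ← h9]; simp
    rcases smul_eq_zero.mp this with h' | h'
    · exact hne1 (by linear_combination -h')
    · exact hne h'
  rcases mul_self_eq_one_iff.mp hsq with h | h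
  · exact h
  -- exclude l = -1
  · exfalso
    subst h
    have hskew : star (A * B) = -(A * B) := by
      rw [star_mul, hA.star_eq, hB.star_eq, hBAeq]; simp
    have hUsa : IsSelfAdjoint (Complex.I • (A * B)) := by
      rw [IsSelfAdjoint, star_smul, hskew]
      simp [Complex.conj_I]
    have hABne : (spectrum ℂ (A * B)).Nonempty := ⟨r, hrAB⟩
    have hIr : Complex.I * r ∈ spectrum ℂ (Complex.I • (A * B)) := by
      rw [spectrum.smul_eq_smul Complex.I (A * B) hABne]
      exact ⟨r, hrAB, rfl⟩
    have := hUsa.im_eq_zero_of_mem_spectrum hIr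
    rw [Complex.mul_im, Complex.I_re, Complex.I_im, hrim] at this
    simp at this
    exact hr0 (Complex.ext this hrim)

theorem stmt_18 {H : Type*} [NormedAddCommGroup H] [InnerProductSpace ℂ H] [CompleteSpace H]
    (A B : H →L[ℂ] H) (l : ℂ) (hl : l ≠ 0)
    (hA : IsSelfAdjoint A) (hB : IsSelfAdjoint B)
    (hcomm : A * B = l • (B * A)) (hne : A * B ≠ 0)
    (hpos : A.IsPositive ∨ B.IsPositive) :
    l = 1 := by
  rcases hpos with hApos | hBpos
  · exact aux_stmt_18 A B l hl hA hB hcomm hne hApos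
  · have hl' : l⁻¹ ≠ 0 := inv_ne_zero hl
    have hBAne : B * A ≠ 0 := by
      intro h
      apply hne
      rw [hcomm, h, smul_zero]
    have hcomm' : B * A = l⁻¹ • (A * B) := by
      rw [hcomm, smul_smul, inv_mul_cancel₀ hl, one_smul]
    have := aux_stmt_18 B A l⁻¹ hl' hB hA hcomm' hBAne hBpos
    rwa [inv_eq_one] at this
end

section
/- Let M and N be bounded normal operators on a complex Hilbert space H and let A be a bounded operator on H. If AN = MA, then AN* = M*A, where T* denotes the Hilbert-space adjoint of T (the Fuglede–Putnam theorem, bounded case). -/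
open NormedSpace

noncomputable instance instNormedAlgebraRatOfComplex {E : Type*} [NormedRing E] [NormedAlgebra ℂ E] :
    NormedAlgebra ℚ E :=
  NormedAlgebra.restrictScalars ℚ ℂ E

section aux

variable {E : Type*} [NormedRing E] [NormedAlgebra ℂ E] [CompleteSpace E]

/-- If `A * X = Y * A` then `A * exp X = exp Y * A`. -/
lemma intertwine_exp (A X Y : E) (h : A * X = Y * A) :
    A * exp X = exp Y * A := by
  have hpow : ∀ n : ℕ, A * X ^ n = Y ^ n * A := by
    intro n
    induction n with
    | zero => simp
    | succ n ih =>
      rw [pow_succ, ← mul_assoc, ih, mul_assoc, h, ← mul_assoc, ← pow_succ]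
  simp only [exp_eq_tsum ℚ]
  rw [← Summable.tsum_mul_left A (expSeries_summable' (𝕂 := ℚ) X),
    ← Summable.tsum_mul_right A (expSeries_summable' (𝕂 := ℚ) Y)]
  congr 1
  funext n
  rw [mul_smul_comm, hpow n, smul_mul_assoc]

lemma exp_neg_mul_exp (X : E) : exp (-X) * exp X = 1 := by
  rw [← exp_add_of_commute (Commute.refl X).neg_left, neg_add_cancel, exp_zero]

end aux

section unit

variable {H : Type*} [NormedAddCommGroup H] [InnerProductSpace ℂ H] [CompleteSpace H]

lemma exp_skew_mem_unitary (S : H →L[ℂ] H) (hS : star S = -S) :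
    exp S ∈ unitary (H →L[ℂ] H) := by
  have hstar : star (exp S) = exp (-S) := by
    rw [← hS, ← star_exp]
  refine Unitary.mem_iff.2 ⟨?_, ?_⟩
  · rw [hstar, exp_neg_mul_exp]
  · rw [hstar, ← exp_add_of_commute (Commute.refl S).neg_right, add_neg_cancel, exp_zero]

lemma norm_exp_skew_le_one (S : H →L[ℂ] H) (hS : star S = -S) :
    ‖exp S‖ ≤ 1 := by
  refine ContinuousLinearMap.opNorm_le_bound _ zero_le_one fun x => ?_
  rw [ContinuousLinearMap.norm_map_of_mem_unitary (exp_skew_mem_unitary S hS), one_mul]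

end unit

theorem stmt_19 {H : Type*} [NormedAddCommGroup H] [InnerProductSpace ℂ H] [CompleteSpace H]
    (M N A : H →L[ℂ] H)
    (hM : ContinuousLinearMap.adjoint M * M = M * ContinuousLinearMap.adjoint M)
    (hN : ContinuousLinearMap.adjoint N * N = N * ContinuousLinearMap.adjoint N)
    (h : A * N = M * A) :
    A * ContinuousLinearMap.adjoint N = ContinuousLinearMap.adjoint M * A := by
  rw [← ContinuousLinearMap.star_eq_adjoint] at hM hN ⊢
  rw [← ContinuousLinearMap.star_eq_adjoint]
  -- Step 1: intertwining of exponentials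
  have key : ∀ c : ℂ, A * exp (c • N) = exp (c • M) * A := fun c =>
    intertwine_exp A _ _ (by rw [mul_smul_comm, smul_mul_assoc, h])
  -- skew-adjointness of the relevant exponents
  have skewM : ∀ z : ℂ,
      star (z • star M - (starRingEnd ℂ z) • M) = -(z • star M - (starRingEnd ℂ z) • M) := by
    intro z
    simp only [star_sub, star_smul, star_star, RCLike.star_def, Complex.conj_conj, neg_sub]
  have skewN : ∀ z : ℂ,
      star ((starRingEnd ℂ z) • N - z • star N) = -((starRingEnd ℂ z) • N - z • star N) := by
    intro z
    simp only [star_sub, star_smul, star_star, RCLike.star_def, Complex.conj_conj, neg_sub]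
  -- the Liouville function
  set f : ℂ → (H →L[ℂ] H) :=
    fun z => exp (z • star M) * A * exp (-(z • star N)) with hf
  have hf_eq : ∀ z : ℂ, f z =
      exp (z • star M - (starRingEnd ℂ z) • M) * A *
        exp ((starRingEnd ℂ z) • N - z • star N) := by
    intro z
    have hA : exp (-((starRingEnd ℂ z) • M)) * A * exp ((starRingEnd ℂ z) • N) = A := by
      rw [mul_assoc, key, ← mul_assoc, exp_neg_mul_exp, one_mul]
    have hcM : Commute (z • star M) (-((starRingEnd ℂ z) • M)) := by
      refine Commute.neg_right ?_
      simp only [Commute, SemiconjBy, smul_mul_smul_comm]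
      rw [hM, mul_comm z]
    have hcN : Commute ((starRingEnd ℂ z) • N) (-(z • star N)) := by
      refine Commute.neg_right ?_
      simp only [Commute, SemiconjBy, smul_mul_smul_comm]
      rw [hN, mul_comm z]
    calc f z = exp (z • star M) *
          (exp (-((starRingEnd ℂ z) • M)) * A * exp ((starRingEnd ℂ z) • N)) *
          exp (-(z • star N)) := by rw [hA]
      _ = (exp (z • star M) * exp (-((starRingEnd ℂ z) • M))) * A *
          (exp ((starRingEnd ℂ z) • N) * exp (-(z • star N))) := by
          simp only [mul_assoc]
      _ = _ := by
          rw [← exp_add_of_commute hcM, ← exp_add_of_commute hcN]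
          simp only [sub_eq_add_neg]
  -- f is bounded
  have hbound : ∀ z : ℂ, ‖f z‖ ≤ ‖A‖ := by
    intro z
    rw [hf_eq z]
    calc ‖exp (z • star M - (starRingEnd ℂ z) • M) * A *
          exp ((starRingEnd ℂ z) • N - z • star N)‖
        ≤ ‖exp (z • star M - (starRingEnd ℂ z) • M) * A‖ *
          ‖exp ((starRingEnd ℂ z) • N - z • star N)‖ := norm_mul_le _ _
      _ ≤ ‖exp (z • star M - (starRingEnd ℂ z) • M)‖ * ‖A‖ *
          ‖exp ((starRingEnd ℂ z) • N - z • star N)‖ :=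
          mul_le_mul_of_nonneg_right (norm_mul_le _ _) (norm_nonneg _)
      _ ≤ 1 * ‖A‖ * 1 := by
          refine mul_le_mul (mul_le_mul_of_nonneg_right ?_ (norm_nonneg _)) ?_
            (norm_nonneg _) (by positivity)
          · exact norm_exp_skew_le_one _ (skewM z)
          · exact norm_exp_skew_le_one _ (skewN z)
      _ = ‖A‖ := by ring
  -- f is differentiable
  have hdiff : Differentiable ℂ f := by
    have h1 : Differentiable ℂ fun z : ℂ => exp (z • star M) := fun t =>
      (hasDerivAt_exp_smul_const (𝕂 := ℂ) (star M) t).differentiableAt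
    have h2 : Differentiable ℂ fun z : ℂ => exp (-(z • star N)) := by
      have he : ∀ z : ℂ, -(z • star N) = z • (-star N) := fun z => (smul_neg z _).symm
      simp_rw [he]
      exact fun t => (hasDerivAt_exp_smul_const (𝕂 := ℂ) (-star N) t).differentiableAt
    exact ((h1.mul_const A).mul h2)
  -- Liouville: f is constant, equal to f 0 = A
  have hconst : ∀ z : ℂ, f z = A := by
    intro z
    have hb : Bornology.IsBounded (Set.range f) := by
      refine isBounded_iff_forall_norm_le.2 ⟨‖A‖, ?_⟩
      rintro y ⟨w, rfl⟩
      exact hbound w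
    have := hdiff.apply_eq_apply_of_bounded hb z 0
    rw [this]
    simp [hf, exp_zero]
  -- hence exp(z • star M) * A = A * exp(z • star N)
  have heq : ∀ z : ℂ, exp (z • star M) * A = A * exp (z • star N) := by
    intro z
    have hz := hconst z
    simp only [hf] at hz
    calc exp (z • star M) * A
        = exp (z • star M) * A * (exp (-(z • star N)) * exp (z • star N)) := by
          rw [exp_neg_mul_exp, mul_one]
      _ = exp (z • star M) * A * exp (-(z • star N)) * exp (z • star N) := by
          rw [mul_assoc (exp (z • star M) * A)]
      _ = A * exp (z • star N) := by rw [hz]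
  -- differentiate at 0
  have hd1 : HasDerivAt (fun z : ℂ => exp (z • star M) * A) (star M * A) 0 := by
    have := (hasDerivAt_exp_smul_const (𝕂 := ℂ) (star M) 0).mul_const A
    simpa [zero_smul, exp_zero] using this
  have hd2 : HasDerivAt (fun z : ℂ => exp (z • star M) * A) (A * star N) 0 := by
    have h0 := (hasDerivAt_exp_smul_const (𝕂 := ℂ) (star N) 0).const_mul A
    have hfun : (fun z : ℂ => A * exp (z • star N)) = fun z : ℂ => exp (z • star M) * A := by
      funext z; rw [heq]
    rw [hfun] at h0
    simpa [zero_smul, exp_zero] using h0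
  exact (hd1.unique hd2).symm
end
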